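/- Let P be the parabolic subgroup of W_d generated by {s_0, s_1, …, s_{d-2}}, and let D = {w ∈ W_d : ℓ(xw) = ℓ(x) + ℓ(w) for all x ∈ P} be the set of minimal length right coset representatives of P in W_d. Then in ℤ[u,v]: ∑_{w ∈ D} u^{2ℓ_c(w)} v^{2ℓ_a(w)} = [d]·(1 + u²v^{2(d-1)}). -/

import Mathlib

open scoped BigOperators

namespace TypeB

/-- Simple reflections of the Weyl group of type B, as permutations of ℤ:
`s 0 = (-1,1)` and `s i = (i,i+1)(-i,-i-1)` for `i ≥ 1`. -/
def s (i : ℕ) : Equiv.Perm ℤ :=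
  if i = 0 then Equiv.swap (-1 : ℤ) 1
  else Equiv.swap (i : ℤ) ((i : ℤ) + 1) * Equiv.swap (-(i : ℤ)) (-(i : ℤ) - 1)

/-- The Weyl group of type B_d: permutations of ℤ supported on `[-d,d]`
satisfying `g (-i) = - g i`. -/
def W (d : ℕ) : Set (Equiv.Perm ℤ) :=
  {g | (∀ i : ℤ, g (-i) = -(g i)) ∧ ∀ i : ℤ, (d : ℤ) < |i| → g i = i}

lemma s_apply_of_pos (i : ℕ) (hi : 1 ≤ i) (x : ℤ) :
    s i x = if x = (i:ℤ) then (i:ℤ)+1 else if x = (i:ℤ)+1 then (i:ℤ)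
      else if x = -(i:ℤ) then -(i:ℤ)-1 else if x = -(i:ℤ)-1 then -(i:ℤ) else x := by
  have h0 : i ≠ 0 := by omega
  have hi' : (1:ℤ) ≤ (i:ℤ) := by exact_mod_cast hi
  simp only [s, if_neg h0, Equiv.Perm.mul_apply, Equiv.swap_apply_def]
  split_ifs <;> omega

lemma s0_apply (x : ℤ) : s 0 x = if x = 1 then -1 else if x = -1 then 1 else x := by
  simp only [s, if_pos rfl, if_true, Equiv.swap_apply_def]
  split_ifs <;> omega

lemma s_mul_self (i : ℕ) : s i * s i = 1 := by
  rcases Nat.eq_zero_or_pos i with h | h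
  · subst h
    ext x
    simp only [Equiv.Perm.mul_apply, Equiv.Perm.one_apply, s0_apply]
    split_ifs <;> first | contradiction | omega
  · ext x
    have hi' : (1:ℤ) ≤ (i:ℤ) := by exact_mod_cast h
    simp only [Equiv.Perm.mul_apply, Equiv.Perm.one_apply, s_apply_of_pos i h]
    split_ifs <;> first | contradiction | omega

lemma s_inv (i : ℕ) : (s i)⁻¹ = s i := inv_eq_of_mul_eq_one_right (s_mul_self i)

lemma one_mem_W (d : ℕ) : (1 : Equiv.Perm ℤ) ∈ W d :=
  ⟨fun i => by simp, fun i _ => rfl⟩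

lemma mul_mem_W {d : ℕ} {g h : Equiv.Perm ℤ} (hg : g ∈ W d) (hh : h ∈ W d) :
    g * h ∈ W d := by
  refine ⟨fun i => ?_, fun i hi => ?_⟩
  · simp only [Equiv.Perm.mul_apply, hh.1, hg.1]
  · simp only [Equiv.Perm.mul_apply, hh.2 i hi, hg.2 i hi]

lemma inv_mem_W {d : ℕ} {g : Equiv.Perm ℤ} (hg : g ∈ W d) : g⁻¹ ∈ W d := by
  constructor
  · intro i
    apply g.injective
    have hai : ∀ x, g (g⁻¹ x) = x := fun x => (Equiv.eq_symm_apply g).mp rfl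
    rw [hai, hg.1 (g⁻¹ i), hai]
  · intro i hi
    rw [Equiv.Perm.inv_eq_iff_eq]
    exact (hg.2 i hi).symm

lemma W_mono {k d : ℕ} (hkd : k ≤ d) : W k ⊆ W d := by
  intro g hg
  exact ⟨hg.1, fun i hi => hg.2 i (lt_of_le_of_lt (by exact_mod_cast hkd) hi)⟩

lemma W_zero {d : ℕ} {g : Equiv.Perm ℤ} (hg : g ∈ W d) : g 0 = 0 := by
  have h := hg.1 0
  rw [neg_zero] at h
  omega

lemma W_absBound {d : ℕ} {g : Equiv.Perm ℤ} (hg : g ∈ W d) {a : ℤ} (ha : |a| ≤ d) :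
    |g a| ≤ d := by
  by_contra h
  push_neg at h
  have h2 := hg.2 (g a) h
  have h3 : g a = a := g.injective h2
  rw [h3] at h
  exact absurd ha (not_le.mpr h)

lemma s_mem_W {i d : ℕ} (hi : i < d) : s i ∈ W d := by
  have hd : (1:ℤ) ≤ (d:ℤ) := by exact_mod_cast Nat.one_le_iff_ne_zero.mpr (by omega)
  rcases Nat.eq_zero_or_pos i with h | h
  · subst h
    constructor
    · intro x
      simp only [s0_apply]
      split_ifs <;> omega
    · intro x hx
      have hx' : x ≠ 1 ∧ x ≠ -1 := by constructor <;> (rintro rfl; simp at hx; omega)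
      simp [s0_apply, hx'.1, hx'.2]
  · have hi' : (1:ℤ) ≤ (i:ℤ) := by exact_mod_cast h
    have hid : (i:ℤ) + 1 ≤ (d:ℤ) := by exact_mod_cast hi
    constructor
    · intro x
      simp only [s_apply_of_pos i h]
      split_ifs <;> omega
    · intro x hx
      rw [s_apply_of_pos i h]
      have : ¬(x = (i:ℤ)) ∧ ¬(x = (i:ℤ)+1) ∧ ¬(x = -(i:ℤ)) ∧ ¬(x = -(i:ℤ)-1) := by
        rcases abs_cases x with ⟨h1, h2⟩ | ⟨h1, h2⟩ <;> omega
      simp [this.1, this.2.1, this.2.2.1, this.2.2.2]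


/-! ## The length statistic `N` -/

def tstat (g : Equiv.Perm ℤ) (a b : ℤ) : ℕ :=
  (if a < b ∧ g b < g a then 1 else 0) + (if a ≤ b ∧ g a + g b < 0 then 1 else 0)

noncomputable def N (d : ℕ) (g : Equiv.Perm ℤ) : ℕ :=
  ∑ p ∈ Finset.Icc (1:ℤ) (d:ℤ) ×ˢ Finset.Icc (1:ℤ) (d:ℤ), tstat g p.1 p.2

lemma N_one (d : ℕ) : N d 1 = 0 := by
  refine Finset.sum_eq_zero fun p hp => ?_
  rw [Finset.mem_product, Finset.mem_Icc, Finset.mem_Icc] at hp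
  rw [tstat, if_neg (by simp only [Equiv.Perm.one_apply]; omega),
    if_neg (by simp only [Equiv.Perm.one_apply]; omega), add_zero]

lemma g1_ne {g : Equiv.Perm ℤ} (hodd : ∀ i : ℤ, g (-i) = -(g i)) : g 1 ≠ 0 := by
  intro hc
  have h2 : g (-1) = 0 := by rw [hodd 1, hc, neg_zero]
  have := g.injective (hc.trans h2.symm)
  omega

lemma N_mul_s_key {d i : ℕ} (g : Equiv.Perm ℤ) (h1 : 1 ≤ i) (h2 : i + 1 ≤ d) :
    N d (g * s i) + (if g ((i:ℤ)+1) < g (i:ℤ) then 1 else 0)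
      = N d g + (if g (i:ℤ) < g ((i:ℤ)+1) then 1 else 0) := by
  classical
  have hi' : (1:ℤ) ≤ (i:ℤ) := by exact_mod_cast h1
  have hid : (i:ℤ)+1 ≤ (d:ℤ) := by exact_mod_cast h2
  set σ : Equiv.Perm ℤ := Equiv.swap (i:ℤ) ((i:ℤ)+1) with hσdef
  have hσ : ∀ x : ℤ, σ x = if x = (i:ℤ) then (i:ℤ)+1 else if x = (i:ℤ)+1 then (i:ℤ) else x := by
    intro x
    simp [hσdef, Equiv.swap_apply_def]
  set S : Finset ℤ := Finset.Icc (1:ℤ) (d:ℤ) with hSdef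
  have hmemS : ∀ x : ℤ, x ∈ S ↔ 1 ≤ x ∧ x ≤ (d:ℤ) := fun x => Finset.mem_Icc
  have hcancel : ∀ x ∈ S, s i (σ x) = x := by
    intro x hx
    rw [hmemS] at hx
    rw [hσ x, s_apply_of_pos i h1]
    split_ifs <;> omega
  set F : ℤ × ℤ → ℕ := fun p => (if σ p.1 < σ p.2 ∧ g p.2 < g p.1 then 1 else 0)
      + (if σ p.1 ≤ σ p.2 ∧ g p.1 + g p.2 < 0 then 1 else 0) with hF
  have hσS : ∀ x ∈ S, σ x ∈ S := by
    intro x hx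
    rw [hmemS] at hx ⊢
    rw [hσ x]
    split_ifs <;> omega
  have hσσ : ∀ x : ℤ, σ (σ x) = x := fun x => Equiv.swap_apply_self _ _ x
  have step1 : N d (g * s i) = ∑ p ∈ S ×ˢ S, F p := by
    rw [N]
    refine (Finset.sum_nbij' (fun p : ℤ × ℤ => (σ p.1, σ p.2))
      (fun p : ℤ × ℤ => (σ p.1, σ p.2)) ?_ ?_ ?_ ?_ ?_).symm
    · intro p hp
      rw [Finset.mem_product] at hp ⊢
      exact ⟨hσS _ hp.1, hσS _ hp.2⟩
    · intro p hp
      rw [Finset.mem_product] at hp ⊢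
      exact ⟨hσS _ hp.1, hσS _ hp.2⟩
    · intro p _; simp [hσσ]
    · intro p _; simp [hσσ]
    · intro p hp
      rw [Finset.mem_product] at hp
      simp only [hF, tstat, Equiv.Perm.mul_apply, hcancel _ hp.1, hcancel _ hp.2]
  have hp1 : ((i:ℤ), (i:ℤ)+1) ∈ S ×ˢ S := by
    rw [Finset.mem_product, hmemS, hmemS]; omega
  have hp2 : ((i:ℤ)+1, (i:ℤ)) ∈ S ×ˢ S := by
    rw [Finset.mem_product, hmemS, hmemS]; omega
  have hne12 : ((i:ℤ)+1, (i:ℤ)) ≠ ((i:ℤ), (i:ℤ)+1) := by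
    simp only [ne_eq, Prod.mk.injEq]; omega
  have hp2' : ((i:ℤ)+1, (i:ℤ)) ∈ (S ×ˢ S).erase ((i:ℤ), (i:ℤ)+1) :=
    Finset.mem_erase.mpr ⟨hne12, hp2⟩
  have key : ∀ p ∈ ((S ×ˢ S).erase ((i:ℤ), (i:ℤ)+1)).erase (((i:ℤ)+1, (i:ℤ))),
      F p = tstat g p.1 p.2 := by
    rintro ⟨a, b⟩ hp
    have h2' := Finset.mem_erase.mp hp
    have h1' := Finset.mem_erase.mp h2'.2
    have hab : a ∈ S ∧ b ∈ S := Finset.mem_product.mp h1'.2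
    have ha := (hmemS a).mp hab.1
    have hb := (hmemS b).mp hab.2
    have hne1 : ¬(a = (i:ℤ) ∧ b = (i:ℤ)+1) := by
      intro hc; exact h1'.1 (by rw [Prod.mk.injEq]; exact hc)
    have hne2 : ¬(a = (i:ℤ)+1 ∧ b = (i:ℤ)) := by
      intro hc; exact h2'.1 (by rw [Prod.mk.injEq]; exact hc)
    have hord1 : σ a < σ b ↔ a < b := by
      rw [hσ a, hσ b]; split_ifs <;> omega
    have hord2 : σ a ≤ σ b ↔ a ≤ b := by
      rw [hσ a, hσ b]; split_ifs <;> omega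
    simp only [hF, tstat, hord1, hord2]
  have hFp1 : F ((i:ℤ), (i:ℤ)+1) = 0 := by
    have e1 : σ (i:ℤ) = (i:ℤ)+1 := Equiv.swap_apply_left _ _
    have e2 : σ ((i:ℤ)+1) = (i:ℤ) := Equiv.swap_apply_right _ _
    simp only [hF, e1, e2]
    split_ifs <;> omega
  have hFp2 : F ((i:ℤ)+1, (i:ℤ)) = (if g (i:ℤ) < g ((i:ℤ)+1) then 1 else 0)
      + (if g (i:ℤ) + g ((i:ℤ)+1) < 0 then 1 else 0) := by
    have e1 : σ (i:ℤ) = (i:ℤ)+1 := Equiv.swap_apply_left _ _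
    have e2 : σ ((i:ℤ)+1) = (i:ℤ) := Equiv.swap_apply_right _ _
    simp only [hF, e1, e2]
    split_ifs <;> omega
  have hGp1 : tstat g ((i:ℤ), (i:ℤ)+1).1 ((i:ℤ), (i:ℤ)+1).2
      = (if g ((i:ℤ)+1) < g (i:ℤ) then 1 else 0)
        + (if g (i:ℤ) + g ((i:ℤ)+1) < 0 then 1 else 0) := by
    simp only [tstat]
    split_ifs <;> omega
  have hGp2 : tstat g ((i:ℤ)+1, (i:ℤ)).1 ((i:ℤ)+1, (i:ℤ)).2 = 0 := by
    simp only [tstat]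
    split_ifs <;> omega
  have eL : ∑ p ∈ S ×ˢ S, F p
      = F ((i:ℤ), (i:ℤ)+1) + (F ((i:ℤ)+1, (i:ℤ))
        + ∑ p ∈ ((S ×ˢ S).erase ((i:ℤ), (i:ℤ)+1)).erase (((i:ℤ)+1, (i:ℤ))), F p) := by
    rw [Finset.add_sum_erase _ F hp2', Finset.add_sum_erase _ F hp1]
  have eR : ∑ p ∈ S ×ˢ S, tstat g p.1 p.2
      = tstat g ((i:ℤ), (i:ℤ)+1).1 ((i:ℤ), (i:ℤ)+1).2
        + (tstat g ((i:ℤ)+1, (i:ℤ)).1 ((i:ℤ)+1, (i:ℤ)).2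
          + ∑ p ∈ ((S ×ˢ S).erase ((i:ℤ), (i:ℤ)+1)).erase (((i:ℤ)+1, (i:ℤ))),
              tstat g p.1 p.2) := by
    rw [Finset.add_sum_erase _ (fun p : ℤ × ℤ => tstat g p.1 p.2) hp2',
      Finset.add_sum_erase _ (fun p : ℤ × ℤ => tstat g p.1 p.2) hp1]
  have hgne : g (i:ℤ) ≠ g ((i:ℤ)+1) := by
    intro hc; have := g.injective hc; omega
  have hsame : ∑ p ∈ ((S ×ˢ S).erase ((i:ℤ), (i:ℤ)+1)).erase (((i:ℤ)+1, (i:ℤ))), F p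
      = ∑ p ∈ ((S ×ˢ S).erase ((i:ℤ), (i:ℤ)+1)).erase (((i:ℤ)+1, (i:ℤ))),
          tstat g p.1 p.2 :=
    Finset.sum_congr rfl key
  rw [step1, eL, hFp1, hFp2, hsame]
  conv_rhs => rw [N, eR, hGp1, hGp2]
  split_ifs <;> omega

lemma N_mul_s0_key {d : ℕ} (g : Equiv.Perm ℤ) (hodd : ∀ i : ℤ, g (-i) = -(g i))
    (hd : 1 ≤ d) :
    N d (g * s 0) + (if g 1 < 0 then 1 else 0) = N d g + (if 0 < g 1 then 1 else 0) := by
  classical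
  have hd' : (1:ℤ) ≤ (d:ℤ) := by exact_mod_cast hd
  set S : Finset ℤ := Finset.Icc (1:ℤ) (d:ℤ) with hSdef
  have hmemS : ∀ x : ℤ, x ∈ S ↔ 1 ≤ x ∧ x ≤ (d:ℤ) := fun x => Finset.mem_Icc
  have hval : ∀ x ∈ S, (g * s 0) x = if x = 1 then -(g 1) else g x := by
    intro x hx
    rw [hmemS] at hx
    rw [Equiv.Perm.mul_apply, s0_apply]
    by_cases hx1 : x = 1
    · subst hx1
      simp only [if_pos rfl]
      exact hodd 1
    · have hx2 : x ≠ -1 := by omega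
      rw [if_neg hx1, if_neg hx2, if_neg hx1]
  have hp0 : ((1:ℤ), (1:ℤ)) ∈ S ×ˢ S :=
    Finset.mem_product.mpr ⟨(hmemS 1).mpr (by omega), (hmemS 1).mpr (by omega)⟩
  have key : ∀ p ∈ (S ×ˢ S).erase ((1:ℤ), (1:ℤ)),
      tstat (g * s 0) p.1 p.2 = tstat g p.1 p.2 := by
    rintro ⟨a, b⟩ hp
    have h1' := Finset.mem_erase.mp hp
    have hab := Finset.mem_product.mp h1'.2
    have ha := (hmemS a).mp hab.1
    have hb := (hmemS b).mp hab.2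
    have hne : ¬(a = 1 ∧ b = 1) := by
      intro hc; exact h1'.1 (by rw [Prod.mk.injEq]; exact hc)
    have hva := hval a hab.1
    have hvb := hval b hab.2
    by_cases ha1 : a = 1
    · subst ha1
      have hb1 : b ≠ 1 := fun hc => hne ⟨rfl, hc⟩
      rw [if_pos rfl] at hva
      rw [if_neg hb1] at hvb
      simp only [tstat, hva, hvb]
      split_ifs <;> omega
    · rw [if_neg ha1] at hva
      by_cases hb1 : b = 1
      · subst hb1
        rw [if_pos rfl] at hvb
        simp only [tstat, hva, hvb, and_true, true_and]
        split_ifs <;> omega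
      · rw [if_neg hb1] at hvb
        simp only [tstat, hva, hvb]
  have hg1 : g 1 ≠ 0 := g1_ne hodd
  have hLp0 : tstat (g * s 0) 1 1 = if 0 < g 1 then 1 else 0 := by
    have hv := hval 1 (by rw [hmemS]; omega)
    simp only [tstat, hv]
    split_ifs <;> omega
  have hGp0 : tstat g 1 1 = if g 1 < 0 then 1 else 0 := by
    simp only [tstat]
    split_ifs <;> omega
  have eL : N d (g * s 0) = tstat (g * s 0) 1 1
      + ∑ p ∈ (S ×ˢ S).erase ((1:ℤ), (1:ℤ)), tstat (g * s 0) p.1 p.2 := by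
    rw [N, Finset.add_sum_erase _ (fun p : ℤ × ℤ => tstat (g * s 0) p.1 p.2) hp0]
  have eR : N d g = tstat g 1 1
      + ∑ p ∈ (S ×ˢ S).erase ((1:ℤ), (1:ℤ)), tstat g p.1 p.2 := by
    rw [N, Finset.add_sum_erase _ (fun p : ℤ × ℤ => tstat g p.1 p.2) hp0]
  have hsame := Finset.sum_congr rfl key
  rw [eL, eR, hLp0, hGp0, hsame]
  split_ifs <;> omega

lemma N_mul_s_cases {d : ℕ} {g : Equiv.Perm ℤ} (hg : g ∈ W d) {i : ℕ} (hi : i < d) :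
    N d (g * s i) = N d g + 1 ∨ N d g = N d (g * s i) + 1 := by
  rcases Nat.eq_zero_or_pos i with h0 | h0
  · subst h0
    have key := N_mul_s0_key (d := d) g hg.1 (by omega)
    have hg1 : g 1 ≠ 0 := g1_ne hg.1
    rcases lt_trichotomy (g 1) 0 with h | h | h
    · right
      rw [if_pos h, if_neg (show ¬(0 < g 1) by omega)] at key
      omega
    · exact absurd h hg1
    · left
      rw [if_neg (show ¬(g 1 < 0) by omega), if_pos h] at key
      omega
  · have key := N_mul_s_key (d := d) g h0 (by omega)
    have hgne : g (i:ℤ) ≠ g ((i:ℤ)+1) := by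
      intro hc; have := g.injective hc; omega
    rcases lt_trichotomy (g (i:ℤ)) (g ((i:ℤ)+1)) with h | h | h
    · left
      rw [if_neg (show ¬(g ((i:ℤ)+1) < g (i:ℤ)) by omega), if_pos h] at key
      omega
    · exact absurd h hgne
    · right
      rw [if_pos h, if_neg (show ¬(g (i:ℤ) < g ((i:ℤ)+1)) by omega)] at key
      omega

lemma word_prop {d : ℕ} (l : List (Equiv.Perm ℤ))
    (hl : ∀ x ∈ l, ∃ i, i < d ∧ x = s i) :
    l.prod ∈ W d ∧ N d l.prod ≤ l.length := by
  induction l using List.reverseRecOn with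
  | nil =>
    simp only [List.prod_nil, List.length_nil]
    exact ⟨one_mem_W d, le_of_eq (N_one d)⟩
  | append_singleton l a ih =>
    obtain ⟨i, hi, rfl⟩ := hl a (by simp)
    have hl' : ∀ x ∈ l, ∃ j, j < d ∧ x = s j := fun x hx => hl x (by simp [hx])
    obtain ⟨hmem, hlen⟩ := ih hl'
    rw [List.prod_append, List.prod_singleton, List.length_append, List.length_singleton]
    refine ⟨mul_mem_W hmem (s_mem_W hi), ?_⟩
    rcases N_mul_s_cases hmem hi with h | h <;> omega

lemma exists_descent {d : ℕ} {g : Equiv.Perm ℤ} (hg : g ∈ W d) (hne : g ≠ 1) :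
    (1 ≤ d ∧ g 1 < 0) ∨ ∃ i : ℕ, 1 ≤ i ∧ i + 1 ≤ d ∧ g ((i:ℤ)+1) < g (i:ℤ) := by
  by_contra hcon
  push_neg at hcon
  obtain ⟨h0, hmon⟩ := hcon
  apply hne
  have hfix : ∀ x : ℤ, 1 ≤ x → x ≤ (d:ℤ) → g x = x := by
    intro x hx1 hx2
    have hd : 1 ≤ d := by omega
    have hg1 : 0 < g 1 := by
      have := h0 hd
      have := g1_ne hg.1
      omega
    have hmon' : ∀ k : ℤ, 1 ≤ k → k + 1 ≤ (d:ℤ) → g k < g (k + 1) := by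
      intro k hk1 hk2
      have hcast : ((k.toNat : ℕ) : ℤ) = k := by omega
      have h := hmon k.toNat (by omega) (by omega)
      rw [hcast] at h
      have hne' : g k ≠ g (k + 1) := by
        intro hc; have := g.injective hc; omega
      omega
    have claimUp : ∀ k : ℤ, 1 ≤ k → k ≤ (d:ℤ) → k ≤ g k := by
      intro k hk1
      refine Int.le_induction (motive := fun k _ => k ≤ (d:ℤ) → k ≤ g k) ?_ ?_ k hk1
      · intro _; omega
      · intro n hn ih hnd
        have h := hmon' n hn (by omega)
        have := ih (by omega)
        omega
    have claimDown : ∀ m : ℕ, ∀ k : ℤ, 1 ≤ k → k + (m:ℤ) = (d:ℤ) → g k = k := by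
      intro m
      induction m with
      | zero =>
        intro k hk1 hkd
        have h1 := claimUp k hk1 (by omega)
        have h2 : |g k| ≤ (d:ℤ) := W_absBound hg (by rcases abs_cases k with ⟨h,_⟩|⟨h,_⟩ <;> omega)
        rcases abs_cases (g k) with ⟨h3,_⟩|⟨h3,_⟩ <;> omega
      | succ m ih =>
        intro k hk1 hkd
        have hs := hmon' k hk1 (by omega)
        have h2 := ih (k+1) (by omega) (by omega)
        have h1 := claimUp k hk1 (by omega)
        omega
    exact claimDown ((d:ℤ) - x).toNat x hx1 (by omega)
  ext x
  rw [Equiv.Perm.one_apply]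
  by_cases hx : |x| ≤ (d:ℤ)
  · rcases lt_trichotomy x 0 with hx0 | hx0 | hx0
    · have hfx : g (-x) = -x := by
        apply hfix (-x) (by omega) (by rcases abs_cases x with ⟨h,_⟩|⟨h,_⟩ <;> omega)
      have h1 : g (-(-x)) = -(g (-x)) := hg.1 (-x)
      rw [neg_neg] at h1
      rw [h1, hfx, neg_neg]
    · rw [hx0]; exact W_zero hg
    · exact hfix x (by omega) (by rcases abs_cases x with ⟨h,_⟩|⟨h,_⟩ <;> omega)
  · push_neg at hx
    exact hg.2 x hx

lemma exists_word {d : ℕ} : ∀ n : ℕ, ∀ g : Equiv.Perm ℤ, g ∈ W d → N d g = n →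
    ∃ l : List (Equiv.Perm ℤ), (∀ x ∈ l, ∃ i, i < d ∧ x = s i) ∧ l.length = n ∧ l.prod = g := by
  intro n
  induction n using Nat.strong_induction_on with
  | _ n ih =>
    intro g hg hN
    by_cases h1 : g = 1
    · subst h1
      rw [N_one] at hN
      exact ⟨[], by simp, by simp [← hN], by simp⟩
    · have hdesc := exists_descent hg h1
      rcases hdesc with ⟨hd, hneg⟩ | ⟨i, hi1, hi2, hdec⟩
      · have key := N_mul_s0_key (d := d) g hg.1 hd
        rw [if_pos hneg, if_neg (show ¬(0 < g 1) by omega)] at key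
        have hmem : g * s 0 ∈ W d := mul_mem_W hg (s_mem_W (by omega))
        have hlt : N d (g * s 0) < n := by omega
        obtain ⟨l, hl, hlen, hprod⟩ := ih _ hlt (g * s 0) hmem rfl
        refine ⟨l ++ [s 0], ?_, ?_, ?_⟩
        · intro x hx
          rcases List.mem_append.mp hx with h | h
          · exact hl x h
          · rw [List.mem_singleton] at h
            exact ⟨0, by omega, h⟩
        · rw [List.length_append, List.length_singleton, hlen]; omega
        · rw [List.prod_append, List.prod_singleton, hprod, mul_assoc, s_mul_self, mul_one]
      · have key := N_mul_s_key (d := d) g hi1 hi2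
        rw [if_pos hdec, if_neg (show ¬(g (i:ℤ) < g ((i:ℤ)+1)) by omega)] at key
        have hmem : g * s i ∈ W d := mul_mem_W hg (s_mem_W (by omega))
        have hlt : N d (g * s i) < n := by omega
        obtain ⟨l, hl, hlen, hprod⟩ := ih _ hlt (g * s i) hmem rfl
        refine ⟨l ++ [s i], ?_, ?_, ?_⟩
        · intro x hx
          rcases List.mem_append.mp hx with h | h
          · exact hl x h
          · rw [List.mem_singleton] at h
            exact ⟨i, by omega, h⟩
        · rw [List.length_append, List.length_singleton, hlen]; omega
        · rw [List.prod_append, List.prod_singleton, hprod, mul_assoc, s_mul_self, mul_one]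

/-- The Coxeter length of `g` with respect to `{s 0, …, s (d-1)}`: the minimal
length of an expression of `g` as a product of simple reflections. -/
noncomputable def len (d : ℕ) (g : Equiv.Perm ℤ) : ℕ :=
  sInf {r | ∃ l : List (Equiv.Perm ℤ),
    (∀ x ∈ l, ∃ i, i < d ∧ x = s i) ∧ l.length = r ∧ l.prod = g}

lemma len_eq_N {d : ℕ} {g : Equiv.Perm ℤ} (hg : g ∈ W d) : len d g = N d g := by
  obtain ⟨l, hl, hlen, hprod⟩ := exists_word (N d g) g hg rfl
  have hmem : N d g ∈ {r | ∃ l : List (Equiv.Perm ℤ),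
      (∀ x ∈ l, ∃ i, i < d ∧ x = s i) ∧ l.length = r ∧ l.prod = g} := ⟨l, hl, hlen, hprod⟩
  apply le_antisymm
  · exact Nat.sInf_le hmem
  · obtain ⟨l₀, hl₀, hlen₀, hprod₀⟩ := Nat.sInf_mem (⟨_, hmem⟩ : Set.Nonempty _)
    calc N d g = N d l₀.prod := by rw [hprod₀]
    _ ≤ l₀.length := (word_prop l₀ hl₀).2
    _ = _ := hlen₀

lemma word_reverse {d : ℕ} (l : List (Equiv.Perm ℤ))
    (hl : ∀ x ∈ l, ∃ i, i < d ∧ x = s i) :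
    l.reverse.prod = l.prod⁻¹ := by
  induction l with
  | nil => simp
  | cons a l ih =>
    obtain ⟨i, _, rfl⟩ := hl a (by simp)
    rw [List.reverse_cons, List.prod_append, List.prod_singleton, List.prod_cons,
      ih (fun x hx => hl x (by simp [hx])), mul_inv_rev, s_inv]

lemma len_inv_le {d : ℕ} {g : Equiv.Perm ℤ} (hg : g ∈ W d) : len d g⁻¹ ≤ len d g := by
  obtain ⟨l, hl, hlen, hprod⟩ := exists_word (N d g) g hg rfl
  have hne : Set.Nonempty {r | ∃ l : List (Equiv.Perm ℤ),
      (∀ x ∈ l, ∃ i, i < d ∧ x = s i) ∧ l.length = r ∧ l.prod = g} := ⟨_, l, hl, hlen, hprod⟩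
  obtain ⟨l₀, hl₀, hlen₀, hprod₀⟩ := Nat.sInf_mem hne
  apply Nat.sInf_le
  refine ⟨l₀.reverse, ?_, ?_, ?_⟩
  · intro x hx
    exact hl₀ x (List.mem_reverse.mp hx)
  · rw [List.length_reverse]; exact hlen₀
  · rw [word_reverse l₀ hl₀, hprod₀]

lemma len_inv {d : ℕ} {g : Equiv.Perm ℤ} (hg : g ∈ W d) : len d g⁻¹ = len d g := by
  have h1 := len_inv_le hg
  have h2 := len_inv_le (inv_mem_W hg)
  rw [inv_inv] at h2
  omega

lemma N_inv {d : ℕ} {g : Equiv.Perm ℤ} (hg : g ∈ W d) : N d g⁻¹ = N d g := by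
  rw [← len_eq_N hg, ← len_eq_N (inv_mem_W hg), len_inv hg]

/-! ## The explicit minimal coset representatives -/

def cfun (d j x : ℤ) : ℤ :=
  if x = j then d else if j < x ∧ x ≤ d then x - 1
  else if x = -j then -d else if -d ≤ x ∧ x < -j then x + 1 else x

def cinv (d j x : ℤ) : ℤ :=
  if x = d then j else if j ≤ x ∧ x < d then x + 1
  else if x = -d then -j else if -d < x ∧ x ≤ -j then x - 1 else x

def C (d j : ℕ) : Equiv.Perm ℤ :=
  if h : 1 ≤ j ∧ j ≤ d then
    { toFun := cfun d j
      invFun := cinv d j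
      left_inv := by
        intro x
        have h1 : (1:ℤ) ≤ (j:ℤ) := by exact_mod_cast h.1
        have h2 : (j:ℤ) ≤ (d:ℤ) := by exact_mod_cast h.2
        simp only [cfun, cinv]
        split_ifs <;> omega
      right_inv := by
        intro x
        have h1 : (1:ℤ) ≤ (j:ℤ) := by exact_mod_cast h.1
        have h2 : (j:ℤ) ≤ (d:ℤ) := by exact_mod_cast h.2
        simp only [cfun, cinv]
        split_ifs <;> omega }
  else 1

def Z (d j : ℕ) : Equiv.Perm ℤ := Equiv.swap (-(d:ℤ)) (d:ℤ) * C d j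

lemma C_apply {d j : ℕ} (h1 : 1 ≤ j) (h2 : j ≤ d) (x : ℤ) : C d j x = cfun d j x := by
  rw [C, dif_pos ⟨h1, h2⟩]
  rfl

lemma C_symm_apply {d j : ℕ} (h1 : 1 ≤ j) (h2 : j ≤ d) (x : ℤ) :
    (C d j)⁻¹ x = cinv d j x := by
  rw [C, dif_pos ⟨h1, h2⟩]
  rfl

lemma Z_apply {d j : ℕ} (h1 : 1 ≤ j) (h2 : j ≤ d) (x : ℤ) :
    Z d j x = if cfun d j x = -(d:ℤ) then (d:ℤ)
      else if cfun d j x = (d:ℤ) then -(d:ℤ) else cfun d j x := by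
  rw [Z, Equiv.Perm.mul_apply, C_apply h1 h2, Equiv.swap_apply_def]

lemma C_mem_W {d j : ℕ} (h1 : 1 ≤ j) (h2 : j ≤ d) : C d j ∈ W d := by
  have hj : (1:ℤ) ≤ (j:ℤ) := by exact_mod_cast h1
  have hjd : (j:ℤ) ≤ (d:ℤ) := by exact_mod_cast h2
  constructor
  · intro x
    rw [C_apply h1 h2, C_apply h1 h2]
    simp only [cfun]
    split_ifs <;> omega
  · intro x hx
    have hx' : (d:ℤ) < x ∨ x < -(d:ℤ) := by
      rcases abs_cases x with ⟨hh, _⟩ | ⟨hh, _⟩ <;> omega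
    rw [C_apply h1 h2]
    simp only [cfun]
    split_ifs <;> omega

lemma swapd_mem_W {d : ℕ} (hd : 1 ≤ d) : Equiv.swap (-(d:ℤ)) (d:ℤ) ∈ W d := by
  have hd' : (1:ℤ) ≤ (d:ℤ) := by exact_mod_cast hd
  constructor
  · intro x
    rw [Equiv.swap_apply_def, Equiv.swap_apply_def]
    split_ifs <;> omega
  · intro x hx
    have hx' : (d:ℤ) < x ∨ x < -(d:ℤ) := by
      rcases abs_cases x with ⟨hh, _⟩ | ⟨hh, _⟩ <;> omega
    rw [Equiv.swap_apply_def]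
    split_ifs <;> omega

lemma Z_mem_W {d j : ℕ} (h1 : 1 ≤ j) (h2 : j ≤ d) : Z d j ∈ W d :=
  mul_mem_W (swapd_mem_W (le_trans h1 h2)) (C_mem_W h1 h2)

/-! ## Counting sums of indicator functions -/

lemma sum_indicator_pair (S : Finset ℤ) (P Q : ℤ → Prop) [DecidablePred P] [DecidablePred Q] :
    ∑ a ∈ S, ∑ b ∈ S, (if P a ∧ Q b then 1 else 0)
      = (S.filter P).card * (S.filter Q).card := by
  rw [← Finset.sum_product', ← Finset.card_filter, Finset.filter_product,
    Finset.card_product]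

lemma filter_eq_card {d j : ℕ} (h1 : 1 ≤ j) (h2 : j ≤ d) :
    ((Finset.Icc (1:ℤ) (d:ℤ)).filter (fun a => a = (j:ℤ))).card = 1 := by
  have hj : (1:ℤ) ≤ (j:ℤ) := by exact_mod_cast h1
  have hjd : (j:ℤ) ≤ (d:ℤ) := by exact_mod_cast h2
  have : (Finset.Icc (1:ℤ) (d:ℤ)).filter (fun a => a = (j:ℤ)) = {(j:ℤ)} := by
    ext a
    simp only [Finset.mem_filter, Finset.mem_Icc, Finset.mem_singleton]
    omega
  rw [this, Finset.card_singleton]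

lemma filter_gt_card {d j : ℕ} (h2 : j ≤ d) :
    ((Finset.Icc (1:ℤ) (d:ℤ)).filter (fun b => (j:ℤ) < b)).card = d - j := by
  have hjd : (j:ℤ) ≤ (d:ℤ) := by exact_mod_cast h2
  have : (Finset.Icc (1:ℤ) (d:ℤ)).filter (fun b => (j:ℤ) < b)
      = Finset.Icc ((j:ℤ)+1) (d:ℤ) := by
    ext a
    simp only [Finset.mem_filter, Finset.mem_Icc]
    omega
  rw [this, Int.card_Icc]
  omega

lemma filter_lt_card {d j : ℕ} (h1 : 1 ≤ j) (h2 : j ≤ d) :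
    ((Finset.Icc (1:ℤ) (d:ℤ)).filter (fun b => b < (j:ℤ))).card = j - 1 := by
  have hj : (1:ℤ) ≤ (j:ℤ) := by exact_mod_cast h1
  have hjd : (j:ℤ) ≤ (d:ℤ) := by exact_mod_cast h2
  have : (Finset.Icc (1:ℤ) (d:ℤ)).filter (fun b => b < (j:ℤ))
      = Finset.Icc (1:ℤ) ((j:ℤ)-1) := by
    ext a
    simp only [Finset.mem_filter, Finset.mem_Icc]
    omega
  rw [this, Int.card_Icc]
  omega

lemma filter_le_card {d j : ℕ} (h1 : 1 ≤ j) (h2 : j ≤ d) :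
    ((Finset.Icc (1:ℤ) (d:ℤ)).filter (fun b => b ≤ (j:ℤ))).card = j := by
  have hj : (1:ℤ) ≤ (j:ℤ) := by exact_mod_cast h1
  have hjd : (j:ℤ) ≤ (d:ℤ) := by exact_mod_cast h2
  have : (Finset.Icc (1:ℤ) (d:ℤ)).filter (fun b => b ≤ (j:ℤ))
      = Finset.Icc (1:ℤ) (j:ℤ) := by
    ext a
    simp only [Finset.mem_filter, Finset.mem_Icc]
    omega
  rw [this, Int.card_Icc]
  omega

/-! ## `N` and `lenc` of the representatives -/

lemma N_C {d j : ℕ} (h1 : 1 ≤ j) (h2 : j ≤ d) : N d (C d j) = d - j := by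
  have hj : (1:ℤ) ≤ (j:ℤ) := by exact_mod_cast h1
  have hjd : (j:ℤ) ≤ (d:ℤ) := by exact_mod_cast h2
  have hpt : ∀ a ∈ Finset.Icc (1:ℤ) (d:ℤ), ∀ b ∈ Finset.Icc (1:ℤ) (d:ℤ),
      tstat (C d j) a b = if a = (j:ℤ) ∧ (j:ℤ) < b then 1 else 0 := by
    intro a ha b hb
    rw [Finset.mem_Icc] at ha hb
    simp only [tstat, C_apply h1 h2, cfun]
    split_ifs <;> omega
  have step : N d (C d j) = ∑ a ∈ Finset.Icc (1:ℤ) (d:ℤ), ∑ b ∈ Finset.Icc (1:ℤ) (d:ℤ),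
      (if a = (j:ℤ) ∧ (j:ℤ) < b then 1 else 0) := by
    rw [N, Finset.sum_product]
    exact Finset.sum_congr rfl fun a ha => Finset.sum_congr rfl fun b hb => hpt a ha b hb
  rw [step, sum_indicator_pair, filter_eq_card h1 h2, filter_gt_card h2, one_mul]

lemma Z_val_helpers {d j : ℕ} (h1 : 1 ≤ j) (h2 : j ≤ d) :
    Z d j (j:ℤ) = -(d:ℤ) ∧
    (∀ a : ℤ, 1 ≤ a → a ≤ (d:ℤ) → a ≠ (j:ℤ) →
      Z d j a = cfun d j a ∧ 1 ≤ cfun d j a ∧ cfun d j a ≤ (d:ℤ) - 1) := by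
  have hj : (1:ℤ) ≤ (j:ℤ) := by exact_mod_cast h1
  have hjd : (j:ℤ) ≤ (d:ℤ) := by exact_mod_cast h2
  constructor
  · rw [Z_apply h1 h2]
    have hc : cfun d j (j:ℤ) = (d:ℤ) := by simp [cfun]
    rw [hc]
    split_ifs <;> omega
  · intro a ha1 ha2 haj
    have hbound : 1 ≤ cfun d j a ∧ cfun d j a ≤ (d:ℤ) - 1 := by
      simp only [cfun]
      split_ifs <;> omega
    refine ⟨?_, hbound⟩
    rw [Z_apply h1 h2]
    split_ifs <;> omega

lemma cfun_mono {d j : ℕ} (h1 : 1 ≤ j) (h2 : j ≤ d) {a b : ℤ}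
    (ha1 : 1 ≤ a) (ha2 : a ≤ (d:ℤ)) (haj : a ≠ (j:ℤ))
    (hb1 : 1 ≤ b) (hb2 : b ≤ (d:ℤ)) (hbj : b ≠ (j:ℤ)) :
    (cfun d j a < cfun d j b ↔ a < b) ∧ (cfun d j a ≤ cfun d j b ↔ a ≤ b) := by
  have hj : (1:ℤ) ≤ (j:ℤ) := by exact_mod_cast h1
  have hjd : (j:ℤ) ≤ (d:ℤ) := by exact_mod_cast h2
  simp only [cfun]
  split_ifs <;> omega

lemma N_Z {d j : ℕ} (h1 : 1 ≤ j) (h2 : j ≤ d) : N d (Z d j) = d + j - 1 := by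
  have hj : (1:ℤ) ≤ (j:ℤ) := by exact_mod_cast h1
  have hjd : (j:ℤ) ≤ (d:ℤ) := by exact_mod_cast h2
  obtain ⟨hZj, hZoff⟩ := Z_val_helpers h1 h2
  have hpt : ∀ a ∈ Finset.Icc (1:ℤ) (d:ℤ), ∀ b ∈ Finset.Icc (1:ℤ) (d:ℤ),
      tstat (Z d j) a b = (if a < (j:ℤ) ∧ b = (j:ℤ) then 1 else 0)
        + ((if a ≤ (j:ℤ) ∧ b = (j:ℤ) then 1 else 0)
          + (if a = (j:ℤ) ∧ (j:ℤ) < b then 1 else 0)) := by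
    intro a ha b hb
    rw [Finset.mem_Icc] at ha hb
    have hp : (1 ≤ a ∧ a ≤ (d:ℤ)) ∧ (1 ≤ b ∧ b ≤ (d:ℤ)) := ⟨ha, hb⟩
    by_cases haj : a = (j:ℤ)
    · subst haj
      by_cases hbj : b = (j:ℤ)
      · subst hbj
        simp only [tstat, hZj, and_true, true_and]
        split_ifs <;> omega
      · obtain ⟨hvb, hlb, hub⟩ := hZoff b hp.2.1 hp.2.2 hbj
        simp only [tstat, hZj, hvb, and_true, true_and]
        split_ifs <;> omega
    · by_cases hbj : b = (j:ℤ)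
      · subst hbj
        obtain ⟨hva, hla, hua⟩ := hZoff a hp.1.1 hp.1.2 haj
        simp only [tstat, hZj, hva, and_true, true_and]
        split_ifs <;> omega
      · obtain ⟨hva, hla, hua⟩ := hZoff a hp.1.1 hp.1.2 haj
        obtain ⟨hvb, hlb, hub⟩ := hZoff b hp.2.1 hp.2.2 hbj
        have hmono := cfun_mono h1 h2 hp.1.1 hp.1.2 haj hp.2.1 hp.2.2 hbj
        simp only [tstat, hva, hvb, and_true, true_and]
        split_ifs <;> omega
  have step : N d (Z d j) = ∑ a ∈ Finset.Icc (1:ℤ) (d:ℤ), ∑ b ∈ Finset.Icc (1:ℤ) (d:ℤ),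
      ((if a < (j:ℤ) ∧ b = (j:ℤ) then 1 else 0)
        + ((if a ≤ (j:ℤ) ∧ b = (j:ℤ) then 1 else 0)
          + (if a = (j:ℤ) ∧ (j:ℤ) < b then 1 else 0))) := by
    rw [N, Finset.sum_product]
    exact Finset.sum_congr rfl fun a ha => Finset.sum_congr rfl fun b hb => hpt a ha b hb
  rw [step]
  simp only [Finset.sum_add_distrib]
  rw [sum_indicator_pair, sum_indicator_pair, sum_indicator_pair,
    filter_eq_card h1 h2, filter_gt_card h2, filter_lt_card h1 h2, filter_le_card h1 h2]
  omega

lemma lenc_eq (d : ℕ) (g : Equiv.Perm ℤ) :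
    ((Finset.Icc (1 : ℤ) (d : ℤ)).filter (fun i => g i < 0)).card
      = ((Finset.Icc (1 : ℤ) (d : ℤ)).filter (fun i => g i < 0)).card := rfl

lemma lenc_C {d j : ℕ} (h1 : 1 ≤ j) (h2 : j ≤ d) :
    ((Finset.Icc (1 : ℤ) (d : ℤ)).filter (fun i => C d j i < 0)).card = 0 := by
  have hj : (1:ℤ) ≤ (j:ℤ) := by exact_mod_cast h1
  have hjd : (j:ℤ) ≤ (d:ℤ) := by exact_mod_cast h2
  rw [Finset.card_eq_zero, Finset.filter_eq_empty_iff]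
  intro a ha
  rw [Finset.mem_Icc] at ha
  rw [C_apply h1 h2]
  simp only [cfun]
  split_ifs <;> omega

lemma lenc_Z {d j : ℕ} (h1 : 1 ≤ j) (h2 : j ≤ d) :
    ((Finset.Icc (1 : ℤ) (d : ℤ)).filter (fun i => Z d j i < 0)).card = 1 := by
  have hj : (1:ℤ) ≤ (j:ℤ) := by exact_mod_cast h1
  have hjd : (j:ℤ) ≤ (d:ℤ) := by exact_mod_cast h2
  obtain ⟨hZj, hZoff⟩ := Z_val_helpers h1 h2
  have : (Finset.Icc (1 : ℤ) (d : ℤ)).filter (fun i => Z d j i < 0) = {(j:ℤ)} := by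
    ext a
    simp only [Finset.mem_filter, Finset.mem_Icc, Finset.mem_singleton]
    constructor
    · rintro ⟨⟨ha1, ha2⟩, hneg⟩
      by_contra haj
      obtain ⟨hva, hla, _⟩ := hZoff a ha1 ha2 haj
      omega
    · rintro rfl
      refine ⟨⟨hj, hjd⟩, ?_⟩
      rw [hZj]
      omega
  rw [this, Finset.card_singleton]
/-! ## Stability and additivity of `N` -/

lemma N_eq_sum (d : ℕ) (g : Equiv.Perm ℤ) :
    N d g = ∑ a ∈ Finset.Icc (1:ℤ) (d:ℤ), ∑ b ∈ Finset.Icc (1:ℤ) (d:ℤ), tstat g a b := by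
  rw [N, Finset.sum_product]

lemma W_bounds {k : ℕ} {x : Equiv.Perm ℤ} (hx : x ∈ W k) {t : ℤ}
    (h1 : -(k:ℤ) ≤ t) (h2 : t ≤ (k:ℤ)) : -(k:ℤ) ≤ x t ∧ x t ≤ (k:ℤ) := by
  have := W_absBound hx (a := t) (abs_le.mpr ⟨h1, h2⟩)
  exact abs_le.mp this

lemma W_fix_top {e : ℕ} {x : Equiv.Perm ℤ} (hx : x ∈ W e) :
    x ((e:ℤ)+1) = (e:ℤ)+1 ∧ x (-((e:ℤ)+1)) = -((e:ℤ)+1) := by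
  constructor
  · exact hx.2 _ (by rw [abs_of_nonneg (by omega)]; omega)
  · exact hx.2 _ (by rw [abs_of_nonpos (by omega)]; omega)

lemma N_succ {e : ℕ} {x : Equiv.Perm ℤ} (hx : x ∈ W e) : N (e+1) x = N e x := by
  rw [N, N]
  refine (Finset.sum_subset ?_ ?_).symm
  · refine Finset.product_subset_product ?_ ?_ <;>
      · intro t ht
        rw [Finset.mem_Icc] at ht ⊢
        push_cast
        omega
  · rintro ⟨a, b⟩ hp hnp
    rw [Finset.mem_product, Finset.mem_Icc, Finset.mem_Icc] at hp hnp
    push_cast at hp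
    have hfix := (W_fix_top hx).1
    by_cases ha : a = (e:ℤ)+1
    · subst ha
      by_cases hb : b = (e:ℤ)+1
      · subst hb
        simp only [tstat, hfix]
        split_ifs <;> omega
      · have hob := W_bounds hx (t := b) (by omega) (by omega)
        simp only [tstat]
        split_ifs <;> omega
    · have hb : b = (e:ℤ)+1 := by omega
      subst hb
      have hoa := W_bounds hx (t := a) (by omega) (by omega)
      simp only [tstat, hfix]
      split_ifs <;> omega

lemma filter_eq_card' {d : ℕ} {p : ℤ} (hp1 : 1 ≤ p) (hp2 : p ≤ (d:ℤ)) :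
    ((Finset.Icc (1:ℤ) (d:ℤ)).filter (fun a => a = p)).card = 1 := by
  have : (Finset.Icc (1:ℤ) (d:ℤ)).filter (fun a => a = p) = {p} := by
    ext a
    simp only [Finset.mem_filter, Finset.mem_Icc, Finset.mem_singleton]
    omega
  rw [this, Finset.card_singleton]

lemma filter_ge_card {d j : ℕ} (h1 : 1 ≤ j) (h2 : j ≤ d) :
    ((Finset.Icc (1:ℤ) (d:ℤ)).filter (fun b => (j:ℤ) ≤ b)).card = d - j + 1 := by
  have hj : (1:ℤ) ≤ (j:ℤ) := by exact_mod_cast h1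
  have hjd : (j:ℤ) ≤ (d:ℤ) := by exact_mod_cast h2
  have : (Finset.Icc (1:ℤ) (d:ℤ)).filter (fun b => (j:ℤ) ≤ b)
      = Finset.Icc (j:ℤ) (d:ℤ) := by
    ext a
    simp only [Finset.mem_filter, Finset.mem_Icc]
    omega
  rw [this, Int.card_Icc]
  omega

lemma sum_ite_card {S : Finset ℤ} (P : ℤ → Prop) [DecidablePred P] (c : ℕ) :
    ∑ b ∈ S, (if P b then c else 0) = c * (S.filter P).card := by
  rw [Finset.card_filter, Finset.mul_sum]
  refine Finset.sum_congr rfl fun b _ => ?_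
  split_ifs <;> omega

/-- The key reindexing: summing `tstat x` over `[1,d] \ {j}` twice equals `N e x`,
when the entries are composed with `cfun`. -/
lemma main_block {e j : ℕ} (h1 : 1 ≤ j) (h2 : j ≤ e + 1) (x : Equiv.Perm ℤ)
    (g' : Equiv.Perm ℤ)
    (hval : ∀ a : ℤ, 1 ≤ a → a ≤ ((e:ℤ)+1) → a ≠ (j:ℤ) → g' a = x (cfun ((e:ℤ)+1) (j:ℤ) a)) :
    ∑ a ∈ (Finset.Icc (1:ℤ) ((e:ℤ)+1)).erase (j:ℤ),
      ∑ b ∈ (Finset.Icc (1:ℤ) ((e:ℤ)+1)).erase (j:ℤ), tstat g' a b = N e x := by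
  have hj : (1:ℤ) ≤ (j:ℤ) := by exact_mod_cast h1
  have hjd : (j:ℤ) ≤ (e:ℤ)+1 := by exact_mod_cast h2
  have hmem : ∀ a : ℤ, a ∈ (Finset.Icc (1:ℤ) ((e:ℤ)+1)).erase (j:ℤ) ↔
      (1 ≤ a ∧ a ≤ (e:ℤ)+1 ∧ a ≠ (j:ℤ)) := by
    intro a
    rw [Finset.mem_erase, Finset.mem_Icc]
    tauto
  have hoff : ∀ a : ℤ, 1 ≤ a → a ≤ (e:ℤ)+1 → a ≠ (j:ℤ) →
      1 ≤ cfun ((e:ℤ)+1) (j:ℤ) a ∧ cfun ((e:ℤ)+1) (j:ℤ) a ≤ (e:ℤ) := by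
    intro a ha1 ha2 haj
    simp only [cfun]
    split_ifs <;> omega
  have hinv1 : ∀ a : ℤ, 1 ≤ a → a ≤ (e:ℤ)+1 → a ≠ (j:ℤ) →
      (if cfun ((e:ℤ)+1) (j:ℤ) a < (j:ℤ) then cfun ((e:ℤ)+1) (j:ℤ) a
        else cfun ((e:ℤ)+1) (j:ℤ) a + 1) = a := by
    intro a ha1 ha2 haj
    simp only [cfun]
    split_ifs <;> omega
  have hinv2 : ∀ a' : ℤ, 1 ≤ a' → a' ≤ (e:ℤ) →
      cfun ((e:ℤ)+1) (j:ℤ) (if a' < (j:ℤ) then a' else a' + 1) = a' := by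
    intro a' ha1 ha2
    simp only [cfun]
    split_ifs <;> omega
  have hmono : ∀ a b : ℤ, 1 ≤ a → a ≤ (e:ℤ)+1 → a ≠ (j:ℤ) →
      1 ≤ b → b ≤ (e:ℤ)+1 → b ≠ (j:ℤ) →
      ((cfun ((e:ℤ)+1) (j:ℤ) a < cfun ((e:ℤ)+1) (j:ℤ) b ↔ a < b) ∧
       (cfun ((e:ℤ)+1) (j:ℤ) a ≤ cfun ((e:ℤ)+1) (j:ℤ) b ↔ a ≤ b)) := by
    intro a b ha1 ha2 haj hb1 hb2 hbj
    simp only [cfun]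
    split_ifs <;> omega
  rw [N_eq_sum]
  refine Finset.sum_nbij' (fun a => cfun ((e:ℤ)+1) (j:ℤ) a)
    (fun a' => if a' < (j:ℤ) then a' else a' + 1) ?_ ?_ ?_ ?_ ?_
  · intro a ha
    rw [hmem] at ha
    rw [Finset.mem_Icc]
    exact hoff a ha.1 ha.2.1 ha.2.2
  · intro a' ha'
    rw [Finset.mem_Icc] at ha'
    rw [hmem]
    split_ifs <;> omega
  · intro a ha
    rw [hmem] at ha
    exact hinv1 a ha.1 ha.2.1 ha.2.2
  · intro a' ha'
    rw [Finset.mem_Icc] at ha'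
    exact hinv2 a' ha'.1 ha'.2
  · intro a ha
    rw [hmem] at ha
    refine Finset.sum_nbij' (fun b => cfun ((e:ℤ)+1) (j:ℤ) b)
      (fun b' => if b' < (j:ℤ) then b' else b' + 1) ?_ ?_ ?_ ?_ ?_
    · intro b hb
      rw [hmem] at hb
      rw [Finset.mem_Icc]
      exact hoff b hb.1 hb.2.1 hb.2.2
    · intro b' hb'
      rw [Finset.mem_Icc] at hb'
      rw [hmem]
      split_ifs <;> omega
    · intro b hb
      rw [hmem] at hb
      exact hinv1 b hb.1 hb.2.1 hb.2.2
    · intro b' hb'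
      rw [Finset.mem_Icc] at hb'
      exact hinv2 b' hb'.1 hb'.2
    · intro b hb
      rw [hmem] at hb
      have hma := hmono a b ha.1 ha.2.1 ha.2.2 hb.1 hb.2.1 hb.2.2
      rw [show tstat g' a b = (if a < b ∧ g' b < g' a then 1 else 0)
        + (if a ≤ b ∧ g' a + g' b < 0 then 1 else 0) from rfl]
      rw [hval a ha.1 ha.2.1 ha.2.2, hval b hb.1 hb.2.1 hb.2.2]
      rw [show tstat x (cfun ((e:ℤ)+1) (j:ℤ) a) (cfun ((e:ℤ)+1) (j:ℤ) b)
        = (if cfun ((e:ℤ)+1) (j:ℤ) a < cfun ((e:ℤ)+1) (j:ℤ) b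
            ∧ x (cfun ((e:ℤ)+1) (j:ℤ) b) < x (cfun ((e:ℤ)+1) (j:ℤ) a) then 1 else 0)
        + (if cfun ((e:ℤ)+1) (j:ℤ) a ≤ cfun ((e:ℤ)+1) (j:ℤ) b
            ∧ x (cfun ((e:ℤ)+1) (j:ℤ) a) + x (cfun ((e:ℤ)+1) (j:ℤ) b) < 0 then 1 else 0)
          from rfl]
      rw [if_congr (and_congr_left' hma.1) rfl rfl, if_congr (and_congr_left' hma.2) rfl rfl]

lemma cfun_off_bounds {e j : ℕ} (h1 : 1 ≤ j) (h2 : j ≤ e + 1) :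
    ∀ a : ℤ, 1 ≤ a → a ≤ (e:ℤ)+1 → a ≠ (j:ℤ) →
      1 ≤ cfun ((e:ℤ)+1) (j:ℤ) a ∧ cfun ((e:ℤ)+1) (j:ℤ) a ≤ (e:ℤ) := by
  have hj : (1:ℤ) ≤ (j:ℤ) := by exact_mod_cast h1
  have hjd : (j:ℤ) ≤ (e:ℤ)+1 := by exact_mod_cast h2
  intro a ha1 ha2 haj
  simp only [cfun]
  split_ifs <;> omega

lemma N_mul_C {e j : ℕ} (h1 : 1 ≤ j) (h2 : j ≤ e + 1) {x : Equiv.Perm ℤ}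
    (hx : x ∈ W e) :
    N (e+1) (x * C (e+1) j) = N (e+1) x + ((e + 1) - j) := by
  have hj : (1:ℤ) ≤ (j:ℤ) := by exact_mod_cast h1
  have hjd : (j:ℤ) ≤ (e:ℤ)+1 := by exact_mod_cast h2
  have hcast : (((e+1 : ℕ)):ℤ) = (e:ℤ)+1 := by push_cast; ring
  set S : Finset ℤ := Finset.Icc (1:ℤ) ((e:ℤ)+1) with hS
  set g' := x * C (e+1) j with hg'
  have hfix := (W_fix_top hx).1
  have hCval : ∀ a : ℤ, C (e+1) j a = cfun ((e:ℤ)+1) (j:ℤ) a := by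
    intro a
    rw [C_apply h1 h2, hcast]
  have hval : ∀ a : ℤ, g' a = x (cfun ((e:ℤ)+1) (j:ℤ) a) := by
    intro a
    rw [hg', Equiv.Perm.mul_apply, hCval]
  have hgj : g' (j:ℤ) = (e:ℤ)+1 := by
    rw [hval]
    have hc : cfun ((e:ℤ)+1) (j:ℤ) (j:ℤ) = (e:ℤ)+1 := by simp [cfun]
    rw [hc, hfix]
  have hoff := cfun_off_bounds h1 h2
  have hjmem : (j:ℤ) ∈ S := by rw [hS, Finset.mem_Icc]; omega
  have hrow : ∀ b ∈ S, tstat g' (j:ℤ) b = if (j:ℤ) < b then 1 else 0 := by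
    intro b hb
    rw [hS, Finset.mem_Icc] at hb
    by_cases hbj : b = (j:ℤ)
    · subst hbj
      simp only [tstat, hgj]
      split_ifs <;> omega
    · have hbb := hoff b hb.1 hb.2 hbj
      have hxb := W_bounds hx (t := cfun ((e:ℤ)+1) (j:ℤ) b) (by omega) (by omega)
      simp only [tstat, hgj, hval b]
      split_ifs <;> omega
  have hcol : ∀ a ∈ S.erase (j:ℤ), tstat g' a (j:ℤ) = 0 := by
    intro a ha
    rw [Finset.mem_erase, hS, Finset.mem_Icc] at ha
    have hbb := hoff a ha.2.1 ha.2.2 ha.1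
    have hxa := W_bounds hx (t := cfun ((e:ℤ)+1) (j:ℤ) a) (by omega) (by omega)
    simp only [tstat, hgj, hval a]
    split_ifs <;> omega
  have e1 : N (e+1) g' = (∑ b ∈ S, tstat g' (j:ℤ) b)
      + ∑ a ∈ S.erase (j:ℤ), ∑ b ∈ S, tstat g' a b := by
    rw [N_eq_sum, hcast, ← Finset.add_sum_erase _ _ hjmem]
  have e2 : ∑ a ∈ S.erase (j:ℤ), ∑ b ∈ S, tstat g' a b
      = ∑ a ∈ S.erase (j:ℤ), (tstat g' a (j:ℤ) + ∑ b ∈ S.erase (j:ℤ), tstat g' a b) :=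
    Finset.sum_congr rfl fun a _ => (Finset.add_sum_erase _ _ hjmem).symm
  have e3 : ∑ a ∈ S.erase (j:ℤ), tstat g' a (j:ℤ) = 0 :=
    Finset.sum_eq_zero hcol
  have e4 : ∑ b ∈ S, tstat g' (j:ℤ) b = (e + 1) - j := by
    rw [Finset.sum_congr rfl hrow, ← Finset.card_filter]
    have := filter_gt_card (d := e+1) (j := j) h2
    rw [hcast] at this
    exact this
  have e5 : ∑ a ∈ S.erase (j:ℤ), ∑ b ∈ S.erase (j:ℤ), tstat g' a b = N e x :=
    main_block h1 h2 x g' (fun a _ _ _ => hval a)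
  have e6 : N (e+1) x = N e x := N_succ hx
  rw [e1, e2, Finset.sum_add_distrib, e3, e4, e5, e6]
  omega

lemma N_mul_Z {e j : ℕ} (h1 : 1 ≤ j) (h2 : j ≤ e + 1) {x : Equiv.Perm ℤ}
    (hx : x ∈ W e) :
    N (e+1) (x * Z (e+1) j) = N (e+1) x + (e + j) := by
  have hj : (1:ℤ) ≤ (j:ℤ) := by exact_mod_cast h1
  have hjd : (j:ℤ) ≤ (e:ℤ)+1 := by exact_mod_cast h2
  have hcast : (((e+1 : ℕ)):ℤ) = (e:ℤ)+1 := by push_cast; ring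
  set S : Finset ℤ := Finset.Icc (1:ℤ) ((e:ℤ)+1) with hS
  set g' := x * Z (e+1) j with hg'
  have hfixn := (W_fix_top hx).2
  obtain ⟨hZj, hZoff⟩ := Z_val_helpers (d := e+1) h1 h2
  rw [hcast] at hZj
  have hval : ∀ a : ℤ, 1 ≤ a → a ≤ (e:ℤ)+1 → a ≠ (j:ℤ) →
      g' a = x (cfun ((e:ℤ)+1) (j:ℤ) a) := by
    intro a ha1 ha2 haj
    have h := hZoff a ha1 (by rw [hcast]; omega) haj
    rw [hcast] at h
    rw [hg', Equiv.Perm.mul_apply, h.1]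
  have hgj : g' (j:ℤ) = -((e:ℤ)+1) := by
    rw [hg', Equiv.Perm.mul_apply, hZj, hfixn]
  have hoff := cfun_off_bounds h1 h2
  have hjmem : (j:ℤ) ∈ S := by rw [hS, Finset.mem_Icc]; omega
  have hrow : ∀ b ∈ S, tstat g' (j:ℤ) b = if (j:ℤ) ≤ b then 1 else 0 := by
    intro b hb
    rw [hS, Finset.mem_Icc] at hb
    by_cases hbj : b = (j:ℤ)
    · subst hbj
      simp only [tstat, hgj]
      split_ifs <;> omega
    · have hbb := hoff b hb.1 hb.2 hbj
      have hxb := W_bounds hx (t := cfun ((e:ℤ)+1) (j:ℤ) b) (by omega) (by omega)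
      simp only [tstat, hgj, hval b hb.1 hb.2 hbj]
      split_ifs <;> omega
  have hcol : ∀ a ∈ S.erase (j:ℤ), tstat g' a (j:ℤ) = if a < (j:ℤ) then 2 else 0 := by
    intro a ha
    rw [Finset.mem_erase, hS, Finset.mem_Icc] at ha
    have hbb := hoff a ha.2.1 ha.2.2 ha.1
    have hxa := W_bounds hx (t := cfun ((e:ℤ)+1) (j:ℤ) a) (by omega) (by omega)
    simp only [tstat, hgj, hval a ha.2.1 ha.2.2 ha.1]
    split_ifs <;> omega
  have e1 : N (e+1) g' = (∑ b ∈ S, tstat g' (j:ℤ) b)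
      + ∑ a ∈ S.erase (j:ℤ), ∑ b ∈ S, tstat g' a b := by
    rw [N_eq_sum, hcast, ← Finset.add_sum_erase _ _ hjmem]
  have e2 : ∑ a ∈ S.erase (j:ℤ), ∑ b ∈ S, tstat g' a b
      = ∑ a ∈ S.erase (j:ℤ), (tstat g' a (j:ℤ) + ∑ b ∈ S.erase (j:ℤ), tstat g' a b) :=
    Finset.sum_congr rfl fun a _ => (Finset.add_sum_erase _ _ hjmem).symm
  have e3 : ∑ a ∈ S.erase (j:ℤ), tstat g' a (j:ℤ) = 2 * (j - 1) := by
    rw [Finset.sum_congr rfl hcol, sum_ite_card]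
    have hfe : (S.erase (j:ℤ)).filter (fun a => a < (j:ℤ)) = Finset.Icc (1:ℤ) ((j:ℤ)-1) := by
      ext a
      simp only [Finset.mem_filter, Finset.mem_erase, hS, Finset.mem_Icc]
      omega
    rw [hfe, Int.card_Icc]
    omega
  have e4 : ∑ b ∈ S, tstat g' (j:ℤ) b = (e + 1) - j + 1 := by
    rw [Finset.sum_congr rfl hrow, ← Finset.card_filter]
    have := filter_ge_card (d := e+1) (j := j) h1 h2
    rw [hcast] at this
    exact this
  have e5 : ∑ a ∈ S.erase (j:ℤ), ∑ b ∈ S.erase (j:ℤ), tstat g' a b = N e x :=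
    main_block h1 h2 x g' hval
  have e6 : N (e+1) x = N e x := N_succ hx
  rw [e1, e2, Finset.sum_add_distrib, e3, e4, e5, e6]
  omega

/-! ## Length of simple reflections -/

lemma N_s {d i : ℕ} (hi : i < d) : N d (s i) = 1 := by
  have hd' : (1:ℤ) ≤ (d:ℤ) := by exact_mod_cast (show 1 ≤ d by omega)
  rcases Nat.eq_zero_or_pos i with h0 | h0
  · subst h0
    have hpt : ∀ a ∈ Finset.Icc (1:ℤ) (d:ℤ), ∀ b ∈ Finset.Icc (1:ℤ) (d:ℤ),
        tstat (s 0) a b = if a = (1:ℤ) ∧ b = (1:ℤ) then 1 else 0 := by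
      intro a ha b hb
      rw [Finset.mem_Icc] at ha hb
      simp only [tstat, s0_apply]
      split_ifs <;> omega
    have step : N d (s 0) = ∑ a ∈ Finset.Icc (1:ℤ) (d:ℤ), ∑ b ∈ Finset.Icc (1:ℤ) (d:ℤ),
        (if a = (1:ℤ) ∧ b = (1:ℤ) then 1 else 0) := by
      rw [N_eq_sum]
      exact Finset.sum_congr rfl fun a ha => Finset.sum_congr rfl fun b hb => hpt a ha b hb
    rw [step, sum_indicator_pair, filter_eq_card' le_rfl hd']
  · have hi' : (1:ℤ) ≤ (i:ℤ) := by exact_mod_cast h0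
    have hid : (i:ℤ)+1 ≤ (d:ℤ) := by exact_mod_cast hi
    have hpt : ∀ a ∈ Finset.Icc (1:ℤ) (d:ℤ), ∀ b ∈ Finset.Icc (1:ℤ) (d:ℤ),
        tstat (s i) a b = if a = (i:ℤ) ∧ b = (i:ℤ)+1 then 1 else 0 := by
      intro a ha b hb
      rw [Finset.mem_Icc] at ha hb
      simp only [tstat, s_apply_of_pos i h0]
      split_ifs <;> omega
    have step : N d (s i) = ∑ a ∈ Finset.Icc (1:ℤ) (d:ℤ), ∑ b ∈ Finset.Icc (1:ℤ) (d:ℤ),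
        (if a = (i:ℤ) ∧ b = (i:ℤ)+1 then 1 else 0) := by
      rw [N_eq_sum]
      exact Finset.sum_congr rfl fun a ha => Finset.sum_congr rfl fun b hb => hpt a ha b hb
    rw [step, sum_indicator_pair, filter_eq_card' hi' (by omega),
      filter_eq_card' (by omega) hid]

lemma len_s {d i : ℕ} (hi : i < d) : len d (s i) = 1 := by
  rw [len_eq_N (s_mem_W hi), N_s hi]

/-! ## Extensionality from positive part -/

lemma ext_from_pos {d : ℕ} {u v : Equiv.Perm ℤ} (hu : u ∈ W d) (hv : v ∈ W d)
    (h : ∀ x : ℤ, 1 ≤ x → x ≤ (d:ℤ) → u x = v x) : u = v := by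
  ext x
  by_cases hx : |x| ≤ (d:ℤ)
  · have hx' : -(d:ℤ) ≤ x ∧ x ≤ (d:ℤ) := abs_le.mp hx
    rcases lt_trichotomy x 0 with hx0 | hx0 | hx0
    · have h1 : u (-(-x)) = -(u (-x)) := hu.1 (-x)
      have h2 : v (-(-x)) = -(v (-x)) := hv.1 (-x)
      rw [neg_neg] at h1 h2
      rw [h1, h2, h (-x) (by omega) (by omega)]
    · subst hx0
      rw [W_zero hu, W_zero hv]
    · exact h x (by omega) (by omega)
  · push_neg at hx
    rw [hu.2 x hx, hv.2 x hx]

lemma cinv_d {d j : ℕ} (h1 : 1 ≤ j) (h2 : j ≤ d) :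
    cinv (d:ℤ) (j:ℤ) (d:ℤ) = (j:ℤ) := by
  have hj : (1:ℤ) ≤ (j:ℤ) := by exact_mod_cast h1
  have hjd : (j:ℤ) ≤ (d:ℤ) := by exact_mod_cast h2
  simp only [cinv]
  split_ifs <;> omega

lemma cinv_mid {d j : ℕ} (h1 : 1 ≤ j) (h2 : j ≤ d) {x : ℤ} (hx1 : 1 ≤ x)
    (hx2 : x ≤ (d:ℤ)-1) :
    cinv (d:ℤ) (j:ℤ) x = if (j:ℤ) ≤ x then x + 1 else x := by
  have hj : (1:ℤ) ≤ (j:ℤ) := by exact_mod_cast h1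
  have hjd : (j:ℤ) ≤ (d:ℤ) := by exact_mod_cast h2
  simp only [cinv]
  split_ifs <;> omega

lemma Zsymm_apply {d j : ℕ} (h1 : 1 ≤ j) (h2 : j ≤ d) (x : ℤ) :
    (Z d j)⁻¹ x = if x = (d:ℤ) then -(j:ℤ) else if x = -(d:ℤ) then (j:ℤ)
      else cinv (d:ℤ) (j:ℤ) x := by
  have hj : (1:ℤ) ≤ (j:ℤ) := by exact_mod_cast h1
  have hjd : (j:ℤ) ≤ (d:ℤ) := by exact_mod_cast h2
  rw [Z, mul_inv_rev, Equiv.Perm.mul_apply, Equiv.swap_inv, C_symm_apply h1 h2,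
    Equiv.swap_apply_def]
  simp only [cinv]
  split_ifs <;> omega

/-! ## Classification of the minimal coset representatives -/

lemma Dmax_classify {d : ℕ} (hd : 1 ≤ d) {w : Equiv.Perm ℤ} (hw : w ∈ W d)
    (hcond : ∀ i : ℕ, i < d - 1 → N d (s i * w) = N d w + 1) :
    ∃ j : ℕ, 1 ≤ j ∧ j ≤ d ∧ (w = C d j ∨ w = Z d j) := by
  have hd' : (1:ℤ) ≤ (d:ℤ) := by exact_mod_cast hd
  set u := w⁻¹ with hu_def
  have hu : u ∈ W d := inv_mem_W hw
  have hNcond : ∀ i : ℕ, i < d - 1 → N d (u * s i) = N d u + 1 := by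
    intro i hi
    have hmm : s i * w ∈ W d := mul_mem_W (s_mem_W (by omega)) hw
    calc N d (u * s i) = N d (s i * w) := by
          have hrw : u * s i = (s i * w)⁻¹ := by rw [mul_inv_rev, s_inv, hu_def]
          rw [hrw]
          exact N_inv hmm
    _ = N d w + 1 := hcond i hi
    _ = N d u + 1 := by rw [hu_def, N_inv hw]
  have hupos : 2 ≤ d → 0 < u 1 := by
    intro hd2
    have key := N_mul_s0_key (d := d) u hu.1 hd
    have hN := hNcond 0 (by omega)
    have hne : u 1 ≠ 0 := g1_ne hu.1
    rcases lt_trichotomy (u 1) 0 with h | h | h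
    · rw [if_pos h, if_neg (show ¬(0 < u 1) by omega)] at key
      omega
    · exact absurd h hne
    · exact h
  have huinc : ∀ k : ℤ, 1 ≤ k → k + 1 ≤ (d:ℤ) - 1 → u k < u (k+1) := by
    intro k hk1 hk2
    have hkn : ((k.toNat : ℕ) : ℤ) = k := by omega
    have key := N_mul_s_key (d := d) u (i := k.toNat) (by omega) (by omega)
    have hN := hNcond k.toNat (by omega)
    rw [hkn] at key
    have hne : u k ≠ u (k+1) := fun hc => by have := u.injective hc; omega
    rcases lt_trichotomy (u k) (u (k+1)) with h | h | h
    · exact h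
    · exact absurd h hne
    · rw [if_pos h, if_neg (show ¬(u k < u (k+1)) by omega)] at key
      omega
  have hud0 : u (d:ℤ) ≠ 0 := by
    intro hc
    have h0 : u 0 = 0 := W_zero hu
    have := u.injective (hc.trans h0.symm)
    omega
  have hudb : -(d:ℤ) ≤ u (d:ℤ) ∧ u (d:ℤ) ≤ (d:ℤ) :=
    abs_le.mp (W_absBound hu (by rw [abs_of_nonneg (show (0:ℤ) ≤ (d:ℤ) by omega)]))
  set j : ℕ := (u (d:ℤ)).natAbs with hj_def
  have hjfact : (j:ℤ) = u (d:ℤ) ∨ (j:ℤ) = -(u (d:ℤ)) := by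
    rw [hj_def]
    omega
  have hj1 : 1 ≤ j := by
    rw [hj_def]
    omega
  have hj2 : j ≤ d := by
    rw [hj_def]
    omega
  have hjc1 : (1:ℤ) ≤ (j:ℤ) := by exact_mod_cast hj1
  have hjc2 : (j:ℤ) ≤ (d:ℤ) := by exact_mod_cast hj2
  have hup : ∀ k : ℤ, 1 ≤ k → k ≤ (d:ℤ)-1 → k ≤ u k := by
    intro k hk1
    refine Int.le_induction (motive := fun k _ => k ≤ (d:ℤ)-1 → k ≤ u k) ?_ ?_ k hk1
    · intro h
      have := hupos (by omega)
      omega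
    · intro n hn ih hnd
      have h1 := huinc n hn (by omega)
      have h2 := ih (by omega)
      omega
  have hdown : ∀ m : ℕ, ∀ k : ℤ, 1 ≤ k → k + (m:ℤ) = (d:ℤ)-1 → u k ≤ k + 1 := by
    intro m
    induction m with
    | zero =>
      intro k hk1 hkd
      have hb := abs_le.mp (W_absBound hu (a := k)
        (by rw [abs_of_nonneg (by omega)]; omega))
      omega
    | succ m ih =>
      intro k hk1 hkd
      have h1 := huinc k hk1 (by omega)
      have h2 := ih (k+1) (by omega) (by omega)
      omega
  have hbnds : ∀ k : ℤ, 1 ≤ k → k ≤ (d:ℤ)-1 → (u k = k ∨ u k = k + 1) ∧ u k ≠ (j:ℤ) := by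
    intro k hk1 hk2
    have h1 := hup k hk1 hk2
    have h2 := hdown ((d:ℤ)-1-k).toNat k hk1 (by omega)
    have hne1 : u k ≠ u (d:ℤ) := fun hc => by have := u.injective hc; omega
    have hne2 : u k ≠ -(u (d:ℤ)) := by
      intro hc
      have hneg : u (-(d:ℤ)) = -(u (d:ℤ)) := hu.1 (d:ℤ)
      have := u.injective (hc.trans hneg.symm)
      omega
    refine ⟨by omega, ?_⟩
    intro hc
    rcases hjfact with h | h <;> omega
  have hA : ∀ k : ℤ, 1 ≤ k → k ≤ (d:ℤ)-1 → k < (j:ℤ) → u k = k := by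
    intro k hk1 hk2 hkj
    by_contra hne
    have hk_val : u k = k + 1 := by
      rcases (hbnds k hk1 hk2).1 with h | h
      · exact absurd h hne
      · exact h
    have hall : ∀ k' : ℤ, k ≤ k' → k' ≤ (d:ℤ)-1 → u k' = k' + 1 := by
      intro k' hk'
      refine Int.le_induction (motive := fun k' _ => k' ≤ (d:ℤ)-1 → u k' = k' + 1) ?_ ?_ k' hk'
      · intro _
        exact hk_val
      · intro n hn ih hnd
        have h1 := huinc n (by omega) (by omega)
        have h2 := ih (by omega)
        have h3 := (hbnds (n+1) (by omega) (by omega)).1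
        omega
    have hx1 := hall ((j:ℤ)-1) (by omega) (by omega)
    have hx2 := (hbnds ((j:ℤ)-1) (by omega) (by omega)).2
    omega
  have hB : ∀ k : ℤ, 1 ≤ k → k ≤ (d:ℤ)-1 → (j:ℤ) ≤ k → u k = k + 1 := by
    intro k hk1 hk2 hkj
    by_contra hne
    have hk_val : u k = k := by
      rcases (hbnds k hk1 hk2).1 with h | h
      · exact h
      · exact absurd h hne
    have hall : ∀ m : ℕ, ∀ k' : ℤ, 1 ≤ k' → k' + (m:ℤ) = k → u k' = k' := by
      intro m
      induction m with
      | zero =>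
        intro k' h1' h2'
        have : k' = k := by omega
        rw [this]
        exact hk_val
      | succ m ih =>
        intro k' h1' h2'
        have hs := huinc k' h1' (by omega)
        have h2 := ih (k'+1) (by omega) (by omega)
        have h3 := (hbnds k' h1' (by omega)).1
        omega
    have hx1 := hall (k - (j:ℤ)).toNat (j:ℤ) (by omega) (by omega)
    have hx2 := (hbnds (j:ℤ) (by omega) (by omega)).2
    omega
  refine ⟨j, hj1, hj2, ?_⟩
  have hw_eq : w = u⁻¹ := by rw [hu_def, inv_inv]
  rcases hjfact with hpos | hneg
  · left
    have hueq : u = (C d j)⁻¹ := by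
      apply ext_from_pos hu (inv_mem_W (C_mem_W hj1 hj2))
      intro x hx1 hx2
      rw [C_symm_apply hj1 hj2]
      by_cases hxd : x = (d:ℤ)
      · subst hxd
        rw [cinv_d hj1 hj2]
        omega
      · have hx2' : x ≤ (d:ℤ)-1 := by omega
        rw [cinv_mid hj1 hj2 hx1 hx2']
        by_cases hxj : (j:ℤ) ≤ x
        · rw [if_pos hxj]
          exact hB x hx1 hx2' hxj
        · rw [if_neg hxj]
          exact hA x hx1 hx2' (by omega)
    rw [hw_eq, hueq, inv_inv]
  · right
    have hueq : u = (Z d j)⁻¹ := by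
      apply ext_from_pos hu (inv_mem_W (Z_mem_W hj1 hj2))
      intro x hx1 hx2
      rw [Zsymm_apply hj1 hj2]
      by_cases hxd : x = (d:ℤ)
      · subst hxd
        rw [if_pos rfl]
        omega
      · rw [if_neg hxd, if_neg (show x ≠ -(d:ℤ) by omega)]
        have hx2' : x ≤ (d:ℤ)-1 := by omega
        rw [cinv_mid hj1 hj2 hx1 hx2']
        by_cases hxj : (j:ℤ) ≤ x
        · rw [if_pos hxj]
          exact hB x hx1 hx2' hxj
        · rw [if_neg hxj]
          exact hA x hx1 hx2' (by omega)
    rw [hw_eq, hueq, inv_inv]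

/-! ## Original definitions -/

/-- The truncated length `ℓ_c g = #{i ∈ [1,d] : g i < 0}`. -/
noncomputable def lenc (d : ℕ) (g : Equiv.Perm ℤ) : ℕ :=
  ((Finset.Icc (1 : ℤ) (d : ℤ)).filter (fun i => g i < 0)).card

/-- The polynomial ring ℤ[u,v]: `u = X 0`, `v = X 1`. -/
noncomputable def U : MvPolynomial (Fin 2) ℤ := MvPolynomial.X 0

noncomputable def V : MvPolynomial (Fin 2) ℤ := MvPolynomial.X 1

/-- The quantum number `[a] = 1 + v² + ⋯ + v^{2(a-1)}` in ℤ[u,v]. -/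
noncomputable def qnum (a : ℕ) : MvPolynomial (Fin 2) ℤ :=
  ∑ i ∈ Finset.range a, V ^ (2 * i)

/-- The parabolic subgroup `P` of `W_d` generated by `{s 0, …, s (d-2)}`. -/
def Pmax (d : ℕ) : Subgroup (Equiv.Perm ℤ) :=
  Subgroup.closure {x | ∃ i, i < d - 1 ∧ x = s i}

/-- The set of minimal length right coset representatives of `P` in `W_d`. -/
noncomputable def Dmax (d : ℕ) : Set (Equiv.Perm ℤ) :=
  {w | w ∈ W d ∧ ∀ x ∈ Pmax d, len d (x * w) = len d x + len d w}

/-! ## Membership in `Dmax` -/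

def Wsub (k : ℕ) : Subgroup (Equiv.Perm ℤ) where
  carrier := W k
  one_mem' := one_mem_W k
  mul_mem' := fun ha hb => mul_mem_W ha hb
  inv_mem' := fun ha => inv_mem_W ha

lemma Pmax_le_W {d : ℕ} : ∀ x ∈ Pmax d, x ∈ W (d - 1) := by
  intro x hx
  have h : Pmax d ≤ Wsub (d - 1) := by
    rw [Pmax]
    apply (Subgroup.closure_le _).mpr
    rintro y ⟨i, hi, rfl⟩
    exact s_mem_W hi
  exact h hx

lemma C_mem_Dmax {d j : ℕ} (hd : 1 ≤ d) (h1 : 1 ≤ j) (h2 : j ≤ d) : C d j ∈ Dmax d := by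
  obtain ⟨e, rfl⟩ : ∃ e, d = e + 1 := ⟨d - 1, by omega⟩
  refine ⟨C_mem_W h1 h2, ?_⟩
  intro x hx
  have hxW : x ∈ W e := by
    have h := Pmax_le_W x hx
    simpa using h
  have hxWd : x ∈ W (e+1) := W_mono (by omega) hxW
  rw [len_eq_N (mul_mem_W hxWd (C_mem_W h1 h2)), len_eq_N hxWd,
    len_eq_N (C_mem_W h1 h2), N_mul_C h1 h2 hxW, N_C h1 h2]

lemma Z_mem_Dmax {d j : ℕ} (hd : 1 ≤ d) (h1 : 1 ≤ j) (h2 : j ≤ d) : Z d j ∈ Dmax d := by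
  obtain ⟨e, rfl⟩ : ∃ e, d = e + 1 := ⟨d - 1, by omega⟩
  refine ⟨Z_mem_W h1 h2, ?_⟩
  intro x hx
  have hxW : x ∈ W e := by
    have h := Pmax_le_W x hx
    simpa using h
  have hxWd : x ∈ W (e+1) := W_mono (by omega) hxW
  rw [len_eq_N (mul_mem_W hxWd (Z_mem_W h1 h2)), len_eq_N hxWd,
    len_eq_N (Z_mem_W h1 h2), N_mul_Z h1 h2 hxW, N_Z h1 h2]
  omega

lemma Dmax_sub {d : ℕ} (hd : 1 ≤ d) {w : Equiv.Perm ℤ} (hw : w ∈ Dmax d) :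
    ∃ j : ℕ, 1 ≤ j ∧ j ≤ d ∧ (w = C d j ∨ w = Z d j) := by
  obtain ⟨hwW, hmin⟩ := hw
  apply Dmax_classify hd hwW
  intro i hi
  have hsP : s i ∈ Pmax d := Subgroup.subset_closure ⟨i, hi, rfl⟩
  have h := hmin (s i) hsP
  have hid : i < d := by omega
  rw [len_eq_N (mul_mem_W (s_mem_W hid) hwW), len_eq_N hwW, len_s hid] at h
  omega

lemma C_inv_d {d j : ℕ} (h1 : 1 ≤ j) (h2 : j ≤ d) : (C d j)⁻¹ (d:ℤ) = (j:ℤ) := by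
  rw [C_symm_apply h1 h2, cinv_d h1 h2]

lemma Z_inv_d {d j : ℕ} (h1 : 1 ≤ j) (h2 : j ≤ d) : (Z d j)⁻¹ (d:ℤ) = -(j:ℤ) := by
  rw [Zsymm_apply h1 h2, if_pos rfl]

lemma C_pos {d j : ℕ} (h1 : 1 ≤ j) (h2 : j ≤ d) {k : ℤ} (hk1 : 1 ≤ k)
    (hk2 : k ≤ (d:ℤ)) : 1 ≤ C d j k := by
  have hj : (1:ℤ) ≤ (j:ℤ) := by exact_mod_cast h1
  have hjd : (j:ℤ) ≤ (d:ℤ) := by exact_mod_cast h2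
  rw [C_apply h1 h2]
  simp only [cfun]
  split_ifs <;> omega

/-! ## The generating function identity -/

/-- `∑_{w ∈ D} u^{2ℓ_c(w)} v^{2ℓ_a(w)} = [d] (1 + u² v^{2(d-1)})`,
where `D` is the set of minimal length right coset representatives for the parabolic
subgroup generated by `{s 0, …, s (d-2)}`. -/
theorem stmt7 (d : ℕ) (hd : 1 ≤ d) :
    (∑ᶠ w ∈ Dmax d, U ^ (2 * lenc d w) * V ^ (2 * (len d w - lenc d w))) =
      qnum d * (1 + U ^ 2 * V ^ (2 * (d - 1))) := by
  classical
  set T : Finset (Equiv.Perm ℤ) :=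
    ((Finset.Icc 1 d).image (C d)) ∪ ((Finset.Icc 1 d).image (Z d)) with hT
  have hset : Dmax d = ↑T := by
    ext w
    simp only [hT, Finset.coe_union, Set.mem_union, Finset.coe_image, Set.mem_image,
      Finset.mem_coe, Finset.coe_Icc, Set.mem_Icc]
    constructor
    · intro hw
      obtain ⟨j, h1, h2, hc | hc⟩ := Dmax_sub hd hw
      · exact Or.inl ⟨j, ⟨h1, h2⟩, hc.symm⟩
      · exact Or.inr ⟨j, ⟨h1, h2⟩, hc.symm⟩
    · rintro (⟨j, ⟨h1, h2⟩, rfl⟩ | ⟨j, ⟨h1, h2⟩, rfl⟩)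
      · exact C_mem_Dmax hd h1 h2
      · exact Z_mem_Dmax hd h1 h2
  rw [hset, finsum_mem_coe_finset, hT]
  have hdisj : Disjoint ((Finset.Icc 1 d).image (C d)) ((Finset.Icc 1 d).image (Z d)) := by
    rw [Finset.disjoint_left]
    rintro w hw1 hw2
    simp only [Finset.mem_image, Finset.mem_Icc] at hw1 hw2
    obtain ⟨j, ⟨hj1, hj2⟩, rfl⟩ := hw1
    obtain ⟨k, ⟨hk1, hk2⟩, heq⟩ := hw2
    have hkd : (k:ℤ) ≤ (d:ℤ) := by exact_mod_cast hk2
    have hk1' : (1:ℤ) ≤ (k:ℤ) := by exact_mod_cast hk1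
    have hv1 : (1:ℤ) ≤ C d j (k:ℤ) := C_pos hj1 hj2 hk1' hkd
    have hv2 : Z d k (k:ℤ) = -(d:ℤ) := (Z_val_helpers hk1 hk2).1
    rw [heq] at hv2
    omega
  rw [Finset.sum_union hdisj]
  have hinjC : ∀ a ∈ Finset.Icc 1 d, ∀ b ∈ Finset.Icc 1 d, C d a = C d b → a = b := by
    intro a ha b hb hab
    rw [Finset.mem_Icc] at ha hb
    have h1 := C_inv_d ha.1 ha.2
    have h2 := C_inv_d hb.1 hb.2
    rw [hab, h2] at h1
    exact_mod_cast h1.symm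
  have hinjZ : ∀ a ∈ Finset.Icc 1 d, ∀ b ∈ Finset.Icc 1 d, Z d a = Z d b → a = b := by
    intro a ha b hb hab
    rw [Finset.mem_Icc] at ha hb
    have h1 := Z_inv_d ha.1 ha.2
    have h2 := Z_inv_d hb.1 hb.2
    rw [hab, h2] at h1
    have : (b:ℤ) = (a:ℤ) := by omega
    exact_mod_cast this.symm
  rw [Finset.sum_image hinjC, Finset.sum_image hinjZ]
  have haveC : ∀ j ∈ Finset.Icc 1 d,
      U ^ (2 * lenc d (C d j)) * V ^ (2 * (len d (C d j) - lenc d (C d j)))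
        = V ^ (2 * (d - j)) := by
    intro j hj
    rw [Finset.mem_Icc] at hj
    have hl : lenc d (C d j) = 0 := lenc_C hj.1 hj.2
    rw [hl, len_eq_N (C_mem_W hj.1 hj.2), N_C hj.1 hj.2]
    norm_num
  have haveZ : ∀ j ∈ Finset.Icc 1 d,
      U ^ (2 * lenc d (Z d j)) * V ^ (2 * (len d (Z d j) - lenc d (Z d j)))
        = (U ^ 2 * V ^ (2 * (d - 1))) * V ^ (2 * (j - 1)) := by
    intro j hj
    rw [Finset.mem_Icc] at hj
    have hl : lenc d (Z d j) = 1 := lenc_Z hj.1 hj.2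
    rw [hl, len_eq_N (Z_mem_W hj.1 hj.2), N_Z hj.1 hj.2]
    have hexp : 2 * (d + j - 1 - 1) = 2 * (d - 1) + 2 * (j - 1) := by omega
    rw [hexp, pow_add]
    ring_nf
  rw [Finset.sum_congr rfl haveC, Finset.sum_congr rfl haveZ, ← Finset.mul_sum]
  have hr1 : ∑ j ∈ Finset.Icc 1 d, V ^ (2 * (d - j)) = qnum d := by
    rw [qnum]
    refine Finset.sum_nbij' (fun j => d - j) (fun i => d - i) ?_ ?_ ?_ ?_ ?_
    · intro a ha
      rw [Finset.mem_Icc] at ha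
      simp only [Finset.mem_range]
      show d - a < d
      omega
    · intro a ha
      rw [Finset.mem_range] at ha
      simp only [Finset.mem_Icc]
      show 1 ≤ d - a ∧ d - a ≤ d
      omega
    · intro a ha
      rw [Finset.mem_Icc] at ha
      show d - (d - a) = a
      omega
    · intro a ha
      rw [Finset.mem_range] at ha
      show d - (d - a) = a
      omega
    · intro a _
      rfl
  have hr2 : ∑ j ∈ Finset.Icc 1 d, V ^ (2 * (j - 1)) = qnum d := by
    rw [qnum]
    refine Finset.sum_nbij' (fun j => j - 1) (fun i => i + 1) ?_ ?_ ?_ ?_ ?_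
    · intro a ha
      rw [Finset.mem_Icc] at ha
      simp only [Finset.mem_range]
      show a - 1 < d
      omega
    · intro a ha
      rw [Finset.mem_range] at ha
      simp only [Finset.mem_Icc]
      show 1 ≤ a + 1 ∧ a + 1 ≤ d
      omega
    · intro a ha
      rw [Finset.mem_Icc] at ha
      show a - 1 + 1 = a
      omega
    · intro a ha
      rw [Finset.mem_range] at ha
      show a + 1 - 1 = a
      omega
    · intro a _
      rfl
  rw [hr1, hr2]
  ring

end TypeB
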